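/- arXiv:1507.08636 — 5 statements merged into one kernel-verified Lean document; each statement's English description precedes it below -/
import Mathlib

section
/- For the unit disk, the weight (c(z+ζ)+d)^n (cz+d)^{-ν-n} action preserves polynomials of degree ≤ n in ζ: if Φ_z(ζ) is a polynomial of degree ≤ n in ζ for each z, then (g^{-β_ν}Φ)_z(ζ) = ((c(z+ζ)+d)^n/(cz+d)^{ν+n}) Φ_{g(z)}( ζ/((c(z+ζ)+d)(cz+d)) ) is again a polynomial of degree ≤ n in ζ. -/
/-!
With `A = c(z+ζ)+d` and `B = cz+d`, the argument `ζ/(AB)` is `ζ/L(ζ)` for the polynomial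
`L = B(cX+B)` of degree at most one. For `p` of degree at most `n`, `L(ζ)^n p(ζ/L(ζ))` is the
homogenization of `p` in degree `n` evaluated at `(ζ, L(ζ))`, and substituting polynomials of
degree at most one into a form of degree `n` gives a polynomial of degree at most `n`. The
prefactor `A^n / B^(ν+n)` is `(AB)^n` up to a constant factor.
-/

open Polynomial

namespace MvPolynomial

theorem natDegree_aeval_le_totalDegree {σ R : Type*} [CommSemiring R] (φ : MvPolynomial σ R)
    {f : σ → R[X]} (hf : ∀ i, (f i).natDegree ≤ 1) :
    (aeval f φ).natDegree ≤ φ.totalDegree := by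
  conv_lhs => rw [φ.as_sum]
  rw [map_sum]
  refine natDegree_sum_le_of_forall_le _ _ fun m hm => ?_
  rw [aeval_monomial, ← Polynomial.C_eq_algebraMap]
  refine (natDegree_C_mul_le _ _).trans <| (natDegree_prod_le _ _).trans <|
    le_trans ?_ (le_totalDegree hm)
  refine Finset.sum_le_sum fun i _ => natDegree_pow_le.trans ?_
  simpa using Nat.mul_le_mul_left (m i) (hf i)

theorem eval_aeval {σ R : Type*} [CommSemiring R] (φ : MvPolynomial σ R) (f : σ → R[X])
    (x : R) :
    (aeval f φ).eval x = eval (fun i => (f i).eval x) φ := by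
  simpa using congrArg (fun g => g φ) (comp_aeval (R := R) (Polynomial.aeval x) (f := f))

end MvPolynomial

namespace Polynomial

variable {K : Type*} [Semifield K]

theorem natDegree_aeval_homogenize_le (p : K[X]) (n : ℕ) {L : K[X]} (hL : L.natDegree ≤ 1) :
    (MvPolynomial.aeval ![X, L] (p.homogenize n)).natDegree ≤ n := by
  refine (MvPolynomial.natDegree_aeval_le_totalDegree _ fun i => ?_).trans
    (isHomogeneous_homogenize p).totalDegree_le
  fin_cases i
  · simp
  · exact hL

theorem eval_aeval_homogenize {p : K[X]} {n : ℕ} (hp : p.natDegree ≤ n) (L : K[X]) {x : K}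
    (hx : L.eval x ≠ 0) :
    (MvPolynomial.aeval ![X, L] (p.homogenize n)).eval x =
      L.eval x ^ n * p.eval (x / L.eval x) := by
  rw [MvPolynomial.eval_aeval, eval_homogenize hp _ (by simpa using hx)]
  simp [mul_comm]

end Polynomial

theorem stmt5_general (n : ℕ) (ν : ℤ)
    (a b c d : ℂ)
    (z : ℂ) (hden : c * z + d ≠ 0)
    (P : ℂ → Polynomial ℂ) (hdeg : ∀ w, (P w).natDegree ≤ n) :
    ∃ Q : Polynomial ℂ, Q.natDegree ≤ n ∧
      ∀ ζ : ℂ, c * (z + ζ) + d ≠ 0 →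
        (c * (z + ζ) + d) ^ (n : ℤ) / (c * z + d) ^ (ν + n) *
            (P ((a * z + b) / (c * z + d))).eval (ζ / ((c * (z + ζ) + d) * (c * z + d)))
          = Q.eval ζ := by
  have hp := hdeg ((a * z + b) / (c * z + d))
  generalize P ((a * z + b) / (c * z + d)) = p at hp ⊢
  set B := c * z + d
  set L : ℂ[X] := C B * (C c * X + C B)
  have hL : L.natDegree ≤ 1 := (natDegree_C_mul_le _ _).trans natDegree_linear_le
  have hLeval (ζ : ℂ) : L.eval ζ = (c * (z + ζ) + d) * B := by simp [L, B]; ring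
  refine ⟨C ((B ^ (ν + n))⁻¹ / B ^ n) * MvPolynomial.aeval ![X, L] (p.homogenize n),
    (natDegree_C_mul_le _ _).trans (natDegree_aeval_homogenize_le p n hL), fun ζ hA => ?_⟩
  have hLζ : L.eval ζ ≠ 0 := by rw [hLeval]; exact mul_ne_zero hA hden
  rw [eval_mul, eval_C, eval_aeval_homogenize hp L hLζ, hLeval, zpow_natCast, mul_pow]
  field_simp

/-- For the unit disk and `g = [[a,b],[c,d]] ∈ SU(1,1)`, the action
`(g^{-β_ν}Φ)_z(ζ) = ((c(z+ζ)+d)^n/(cz+d)^{ν+n}) Φ_{g(z)}(ζ/((c(z+ζ)+d)(cz+d)))`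
preserves polynomials of degree ≤ n in ζ: if `Φ_w` is a polynomial of degree ≤ n for
each `w`, then `ζ ↦ (g^{-β_ν}Φ)_z(ζ)` agrees (where defined) with a polynomial of
degree ≤ n. (`ν+n` is an even integer so no branch issues arise.) -/
theorem stmt5 (n : ℕ) (ν : ℤ) (hν : Even (ν + n))
    (a b c d : ℂ)
    (hsu : d = starRingEnd ℂ a ∧ c = starRingEnd ℂ b ∧ a * d - b * c = 1)
    (z : ℂ) (hz : ‖z‖ < 1) (hden : c * z + d ≠ 0)
    (P : ℂ → Polynomial ℂ) (hdeg : ∀ w, (P w).natDegree ≤ n) :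
    ∃ Q : Polynomial ℂ, Q.natDegree ≤ n ∧
      ∀ ζ : ℂ, c * (z + ζ) + d ≠ 0 →
        (c * (z + ζ) + d) ^ (n : ℤ) / (c * z + d) ^ (ν + n) *
            (P ((a * z + b) / (c * z + d))).eval (ζ / ((c * (z + ζ) + d) * (c * z + d)))
          = Q.eval ζ :=
  stmt5_general n ν a b c d z hden P hdeg
end

section
/- For the unit ball reproducing kernel K^{ν,λ}_{z,w}(ζ,ω) = (1-(z|w))^{-ν} (B_{z,w}^{-1}ζ|ω)^λ/λ!, the component of bidegree (k,k) in (z, w̄) evaluated at z = w = 0 equals (1/λ!)(ζ|ω)^{λ+k} Σ_{p+q=k} C(ν+λ+k-1, p) C(λ, q). -/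
/-! With `x = r²t`, `t = (ζ|ω)`, one has `t + x t/(1 - x) = t/(1 - x)`, so the kernel on the ray
is `t^λ (1 - x)^{-(ν+2λ)}/λ!`, whose binomial series has coefficients `C(ν+2λ+k-1, k)`. Since
`(ν+λ+q)_p/p! = C(ν+λ+k-1, p)` when `p + q = k`, the stated sums are these coefficients by
Chu–Vandermonde. -/

open Finset Nat

theorem ascPochhammer_eval_div_factorial {K : Type*} [Field K] [CharZero K] (a : K) (n : ℕ) :
    (ascPochhammer K n).eval a / n ! = Ring.choose (a + n - 1) n := by
  rw [Ring.choose_eq_smul, Polynomial.descPochhammer_smeval_eq_ascPochhammer,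
    Polynomial.ascPochhammer_smeval_cast, Polynomial.ascPochhammer_smeval_eq_eval, smul_eq_mul]
  ring_nf

theorem sum_range_ascPochhammer_div_factorial_mul_choose {K : Type*} [Field K] [CharZero K]
    (a : K) (lam k : ℕ) :
    ∑ p ∈ range (k + 1),
        (ascPochhammer K p).eval (a + lam + ((k - p : ℕ) : K)) / p ! * (lam.choose (k - p))
      = Ring.choose (a + 2 * lam + k - 1) k := by
  calc _ = ∑ ij ∈ antidiagonal k,
          Ring.choose (a + lam + k - 1) ij.1 * Ring.choose (lam : K) ij.2 := by
        rw [Nat.sum_antidiagonal_eq_sum_range_succ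
          (fun p q => Ring.choose (a + lam + k - 1) p * Ring.choose (lam : K) q)]
        refine sum_congr rfl fun p hp => ?_
        rw [ascPochhammer_eval_div_factorial, Ring.choose_natCast,
          Nat.cast_sub (Nat.lt_succ_iff.mp (mem_range.mp hp))]
        ring_nf
    _ = Ring.choose (a + lam + k - 1 + lam) k := (Ring.add_choose_eq k (Commute.all _ _)).symm
    _ = _ := by ring_nf

theorem Complex.hasSum_choose_mul_pow {x : ℂ} (a : ℂ) (hx : ‖x‖ < 1) :
    HasSum (fun n : ℕ => Ring.choose (a + n - 1) n * x ^ n) ((1 - x) ^ (-a)) := by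
  have h := (one_div_one_sub_cpow_hasFPowerSeriesOnBall_zero a).hasSum
    (y := x) (by simpa [← ofReal_norm] using hx)
  simpa [FormalMultilinearSeries.ofScalars_apply_eq, Complex.cpow_neg, mul_comm] using h

theorem Complex.one_sub_cpow_neg_mul_add_div_pow {x : ℂ} (hx : x ≠ 1) (a t : ℂ) (lam : ℕ) :
    (1 - x) ^ (-(a + lam)) * (t + x * t / (1 - x)) ^ lam =
      t ^ lam * (1 - x) ^ (-(a + 2 * lam)) := by
  have hx' : 1 - x ≠ 0 := sub_ne_zero.mpr hx.symm
  have hsum : t + x * t / (1 - x) = t / (1 - x) := by field_simp; ring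
  rw [hsum, div_pow, ← cpow_natCast (1 - x), show -(a + 2 * lam) = -(a + lam) - lam by ring,
    cpow_sub _ _ hx']
  ring

theorem stmt8_general {d : ℕ} (ν : ℝ) (lam : ℕ)
    (ζ ω : EuclideanSpace ℂ (Fin d)) (r : ℂ)
    (hr : ‖r‖ ^ 2 * ‖(inner ℂ ζ ω : ℂ)‖ < 1) :
    HasSum
      (fun k : ℕ =>
        ((1 : ℂ) / (Nat.factorial lam) * (inner ℂ ζ ω : ℂ) ^ (lam + k) *
            ∑ p ∈ Finset.range (k + 1),
              ((ascPochhammer ℂ p).eval ((ν : ℂ) + lam + ((k - p : ℕ) : ℂ)) /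
                  (Nat.factorial p)) * (lam.choose (k - p))) * r ^ (2 * k))
      ((1 - r ^ 2 * (inner ℂ ζ ω : ℂ)) ^ (-((ν : ℂ) + lam)) *
        ((inner ℂ ζ ω : ℂ) + r ^ 2 * (inner ℂ ζ ω : ℂ) ^ 2 /
            (1 - r ^ 2 * (inner ℂ ζ ω : ℂ))) ^ lam / (Nat.factorial lam)) := by
  set t : ℂ := inner ℂ ζ ω
  have hx : ‖r ^ 2 * t‖ < 1 := by rwa [norm_mul, norm_pow]
  have hx1 : r ^ 2 * t ≠ 1 := by rintro h; simp [h] at hx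
  rw [show r ^ 2 * t ^ 2 = r ^ 2 * t * t by ring, Complex.one_sub_cpow_neg_mul_add_div_pow hx1,
    mul_div_right_comm]
  refine ((Complex.hasSum_choose_mul_pow ((ν : ℂ) + 2 * lam) hx).mul_left _).congr_fun
    fun k => ?_
  rw [sum_range_ascPochhammer_div_factorial_mul_choose]
  ring

/-- For the unit ball reproducing kernel
`K^{ν,λ}_{z,w}(ζ,ω) = (1-(z|w))^{-ν-λ}((ζ|ω) + (ζ|w)(z|ω)/(1-(z|w)))^λ/λ!`,
the homogeneous components of bidegree `(k,k)` in `(z,w̄)`, evaluated with `z,w`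
replaced along the ray `z = rζ, w = r̄ω` (so that the bidegree-(k,k) component
contributes `r^{2k}`), are
`(1/λ!)(ζ|ω)^{λ+k} Σ_{p+q=k} C(ν+λ+k-1,p) C(λ,q)`,
where `C(ν+λ+k-1,p) = (ν+λ+q)_p/p!` (generalized binomial coefficient).  That is,
the kernel restricted to the ray is the sum of these components times `r^{2k}`. -/
theorem stmt8 {d : ℕ} (ν : ℝ) (hν : 0 < ν) (lam : ℕ)
    (ζ ω : EuclideanSpace ℂ (Fin d)) (r : ℂ)
    (hr : ‖r‖ ^ 2 * ‖(inner ℂ ζ ω : ℂ)‖ < 1) :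
    HasSum
      (fun k : ℕ =>
        ((1 : ℂ) / (Nat.factorial lam) * (inner ℂ ζ ω : ℂ) ^ (lam + k) *
            ∑ p ∈ Finset.range (k + 1),
              ((ascPochhammer ℂ p).eval ((ν : ℂ) + lam + ((k - p : ℕ) : ℂ)) /
                  (Nat.factorial p)) * (lam.choose (k - p))) * r ^ (2 * k))
      ((1 - r ^ 2 * (inner ℂ ζ ω : ℂ)) ^ (-((ν : ℂ) + lam)) *
        ((inner ℂ ζ ω : ℂ) + r ^ 2 * (inner ℂ ζ ω : ℂ) ^ 2 /
            (1 - r ^ 2 * (inner ℂ ζ ω : ℂ))) ^ lam / (Nat.factorial lam)) :=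
  stmt8_general ν lam ζ ω r hr
end

section
/- The alternating binomial-Gamma identity Σ_{ℓ=0}^{λ} (-1)^ℓ C(λ,ℓ) Γ(a+ℓ)/Γ(b+ℓ) = B(λ+b-a, a)/Γ(b-a) holds, where B is the Beta function, for real b > a > 0. -/
/-- The alternating binomial-Gamma identity
`Σ_{ℓ=0}^{λ} (-1)^ℓ C(λ,ℓ) Γ(a+ℓ)/Γ(b+ℓ) = B(λ+b-a, a)/Γ(b-a)` for real `b > a > 0`,
where `B(x,y) = Γ(x)Γ(y)/Γ(x+y)` is the Beta function. -/
theorem stmt9 (lam : ℕ) (a b : ℝ) (ha : 0 < a) (hab : a < b) :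
    ∑ l ∈ Finset.range (lam + 1),
        (-1 : ℝ) ^ l * (lam.choose l) * (Real.Gamma (a + l) / Real.Gamma (b + l))
      = (Real.Gamma ((lam : ℝ) + b - a) * Real.Gamma a / Real.Gamma ((lam : ℝ) + b)) /
          Real.Gamma (b - a) := by
  induction lam generalizing a b with
  | zero =>
    have h1 : (0:ℝ) < Real.Gamma (b - a) := Real.Gamma_pos_of_pos (by linarith)
    have h2 : (0:ℝ) < Real.Gamma b := Real.Gamma_pos_of_pos (by linarith)
    simp only [Finset.sum_range_one, pow_zero, Nat.choose_zero_right, Nat.cast_zero,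
      Nat.cast_one, zero_add, add_zero, one_mul, mul_one]
    field_simp
  | succ n ih =>
    have key : ∑ l ∈ Finset.range (n + 1 + 1),
        (-1 : ℝ) ^ l * ((n+1).choose l) * (Real.Gamma (a + l) / Real.Gamma (b + l))
      = (∑ l ∈ Finset.range (n + 1),
          (-1 : ℝ) ^ l * (n.choose l) * (Real.Gamma (a + l) / Real.Gamma (b + l)))
        - ∑ l ∈ Finset.range (n + 1),
          (-1 : ℝ) ^ l * (n.choose l) *
            (Real.Gamma ((a+1) + l) / Real.Gamma ((b+1) + l)) := by
      rw [Finset.sum_range_succ']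
      have hterm : ∀ i ∈ Finset.range (n + 1),
          (-1 : ℝ) ^ (i+1) * ((n+1).choose (i+1)) *
              (Real.Gamma (a + (i+1:ℕ)) / Real.Gamma (b + (i+1:ℕ)))
          = (-1 : ℝ) ^ (i+1) * (n.choose (i+1)) *
              (Real.Gamma (a + (i+1:ℕ)) / Real.Gamma (b + (i+1:ℕ)))
            - (-1 : ℝ) ^ i * (n.choose i) *
              (Real.Gamma ((a+1) + i) / Real.Gamma ((b+1) + i)) := by
        intro i _
        rw [Nat.choose_succ_succ]
        push_cast
        rw [show a + ((i:ℝ)+1) = (a+1) + i by ring, show b + ((i:ℝ)+1) = (b+1) + i by ring]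
        ring
      rw [Finset.sum_congr rfl hterm, Finset.sum_sub_distrib]
      have : (∑ i ∈ Finset.range (n+1),
          (-1 : ℝ) ^ (i+1) * (n.choose (i+1)) *
            (Real.Gamma (a + (i+1:ℕ)) / Real.Gamma (b + (i+1:ℕ))))
          + (-1 : ℝ) ^ 0 * (n.choose 0) * (Real.Gamma (a + (0:ℕ)) / Real.Gamma (b + (0:ℕ)))
        = ∑ l ∈ Finset.range (n + 1),
            (-1 : ℝ) ^ l * (n.choose l) * (Real.Gamma (a + l) / Real.Gamma (b + l)) := by
        rw [← Finset.sum_range_succ' (fun l => (-1 : ℝ) ^ l * (n.choose l) *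
            (Real.Gamma (a + l) / Real.Gamma (b + l))) (n+1), Finset.sum_range_succ]
        simp [Nat.choose_succ_self]
      simp only [Nat.choose_zero_right, Nat.cast_one] at this ⊢
      linarith [this]
    rw [key, ih a b ha hab, ih (a+1) (b+1) (by linarith) (by linarith)]
    have hne : a ≠ 0 := ha.ne'
    have hb : (0:ℝ) < b := ha.trans hab
    have hn0 : (0:ℝ) ≤ (n:ℝ) := Nat.cast_nonneg n
    have hnb : (n:ℝ) + b ≠ 0 := by nlinarith
    have hnba : (n:ℝ) + b - a ≠ 0 := by
      have : (0:ℝ) < (n:ℝ) + b - a := by linarith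
      exact this.ne'
    rw [show (n:ℝ) + (b+1) - (a+1) = (n:ℝ) + b - a by ring,
        show (n:ℝ) + (b+1) = ((n:ℝ) + b) + 1 by ring,
        show (b+1) - (a+1) = b - a by ring,
        show ((n:ℕ)+1:ℕ) = n+1 from rfl]
    push_cast
    rw [show (n:ℝ) + 1 + b - a = ((n:ℝ) + b - a) + 1 by ring,
        show (n:ℝ) + 1 + b = ((n:ℝ) + b) + 1 by ring,
        Real.Gamma_add_one hne, Real.Gamma_add_one hnb, Real.Gamma_add_one hnba]
    have hG1 : (0:ℝ) < Real.Gamma (b - a) := Real.Gamma_pos_of_pos (by linarith)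
    have hG2 : (0:ℝ) < Real.Gamma ((n:ℝ) + b) := Real.Gamma_pos_of_pos (by linarith)
    field_simp
end

section
/- Let A : H → H' be a bounded operator between reproducing kernel Hilbert spaces of holomorphic V- resp. V'-valued maps on D which intertwines all multiplications by holomorphic multipliers (f^∘ A = A f^∘). Then A acts pointwise: (AΦ)_z = A_z Φ_z where A_z ∈ Hom(V,V') is defined by A_zφ = (Aφ)_z on constant functions φ ∈ V, provided all constant functions belong to H. -/
open scoped InnerProductSpace

theorem OrthonormalBasis.map_eq_sum_inner_smul {ι 𝕜 E F : Type*} [Fintype ι] [RCLike 𝕜]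
    [NormedAddCommGroup E] [InnerProductSpace 𝕜 E] [AddCommGroup F] [Module 𝕜 F]
    (b : OrthonormalBasis ι 𝕜 E) (L : E →ₗ[𝕜] F) (x : E) :
    L x = ∑ i, ⟪b i, x⟫_𝕜 • L (b i) := by
  conv_lhs => rw [← b.sum_repr' x]
  simp only [map_sum, map_smul]

/-- Expand `Φ = Σ_i (φ_i|Φ)^∘ φ_i` and move each multiplier through `A`. -/
theorem eval_apply_eq_sum_inner_smul {D H H' V V' ι : Type*} [Fintype ι]
    [NormedAddCommGroup H] [InnerProductSpace ℂ H]
    [NormedAddCommGroup H'] [InnerProductSpace ℂ H']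
    [NormedAddCommGroup V] [InnerProductSpace ℂ V]
    [NormedAddCommGroup V'] [InnerProductSpace ℂ V']
    (b : OrthonormalBasis ι ℂ V) (ev : D → (H →L[ℂ] V)) (ev' : D → (H' →L[ℂ] V'))
    (c : V →L[ℂ] H) (M : H → ι → (H →L[ℂ] H)) (M' : H → ι → (H' →L[ℂ] H'))
    (hM' : ∀ (Φ : H) (i : ι) (Ψ' : H') (z : D),
      ev' z (M' Φ i Ψ') = ⟪b i, ev z Φ⟫_ℂ • ev' z Ψ')
    (hrec : ∀ Φ : H, Φ = ∑ i, M Φ i (c (b i)))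
    (A : H →L[ℂ] H') (hA : ∀ (Φ : H) (i : ι), A.comp (M Φ i) = (M' Φ i).comp A)
    (Φ : H) (z : D) :
    ev' z (A Φ) = ∑ i, ⟪b i, ev z Φ⟫_ℂ • ev' z (A (c (b i))) := by
  conv_lhs => rw [hrec Φ]
  simp only [map_sum]
  refine Finset.sum_congr rfl fun i _ => ?_
  rw [← ContinuousLinearMap.comp_apply A, hA, ContinuousLinearMap.comp_apply, hM']

theorem stmt13_general {D H H' V V' : Type*}
    [NormedAddCommGroup H] [InnerProductSpace ℂ H]
    [NormedAddCommGroup H'] [InnerProductSpace ℂ H']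
    [NormedAddCommGroup V] [InnerProductSpace ℂ V]
    [NormedAddCommGroup V'] [InnerProductSpace ℂ V']
    {m : ℕ} (bV : OrthonormalBasis (Fin m) ℂ V)
    (ev : D → (H →L[ℂ] V)) (ev' : D → (H' →L[ℂ] V'))
    (ι : V →L[ℂ] H)
    (M : H → Fin m → (H →L[ℂ] H)) (M' : H → Fin m → (H' →L[ℂ] H'))
    (hM' : ∀ (Φ : H) (i : Fin m) (Ψ' : H') (z : D),
      ev' z (M' Φ i Ψ') = (inner ℂ (bV i) (ev z Φ) : ℂ) • ev' z Ψ')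
    (hrec : ∀ Φ : H, Φ = ∑ i, M Φ i (ι (bV i)))
    (A : H →L[ℂ] H')
    (hA : ∀ (Φ : H) (i : Fin m), A.comp (M Φ i) = (M' Φ i).comp A) :
    ∀ (Φ : H) (z : D), ev' z (A Φ) = ev' z (A (ι (ev z Φ))) := by
  intro Φ z
  rw [eval_apply_eq_sum_inner_smul bV ev ev' ι M M' hM' hrec A hA Φ z]
  exact (bV.map_eq_sum_inner_smul ((ev' z).comp (A.comp ι)).toLinearMap (ev z Φ)).symm

/-- Let `A : H → H'` be a bounded operator between reproducing kernel
Hilbert spaces of holomorphic `V`- resp. `V'`-valued maps on `D` (realized here via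
evaluation maps `ev z`, `ev' z`), containing the constants (`ι : V → H`,
`ev z (ι φ) = φ`), such that `A` intertwines all multiplications by the holomorphic
multipliers `z ↦ (φ_i|Φ_z)` (so that `Φ = Σ_i (φ_i|Φ)^∘ φ_i`).  Then `A` acts
pointwise: `(AΦ)_z = A_z Φ_z`, where `A_z φ = (Aφ)_z` on constants `φ ∈ V`. -/
theorem stmt13 {D H H' V V' : Type*}
    [NormedAddCommGroup H] [InnerProductSpace ℂ H]
    [NormedAddCommGroup H'] [InnerProductSpace ℂ H']
    [NormedAddCommGroup V] [InnerProductSpace ℂ V] [FiniteDimensional ℂ V]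
    [NormedAddCommGroup V'] [InnerProductSpace ℂ V']
    {m : ℕ} (bV : OrthonormalBasis (Fin m) ℂ V)
    (ev : D → (H →L[ℂ] V)) (ev' : D → (H' →L[ℂ] V'))
    (ι : V →L[ℂ] H) (hι : ∀ (z : D) (φ : V), ev z (ι φ) = φ)
    (M : H → Fin m → (H →L[ℂ] H)) (M' : H → Fin m → (H' →L[ℂ] H'))
    (hM : ∀ (Φ : H) (i : Fin m) (Ψ : H) (z : D),
      ev z (M Φ i Ψ) = (inner ℂ (bV i) (ev z Φ) : ℂ) • ev z Ψ)
    (hM' : ∀ (Φ : H) (i : Fin m) (Ψ' : H') (z : D),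
      ev' z (M' Φ i Ψ') = (inner ℂ (bV i) (ev z Φ) : ℂ) • ev' z Ψ')
    (hrec : ∀ Φ : H, Φ = ∑ i, M Φ i (ι (bV i)))
    (A : H →L[ℂ] H')
    (hA : ∀ (Φ : H) (i : Fin m), A.comp (M Φ i) = (M' Φ i).comp A) :
    ∀ (Φ : H) (z : D), ev' z (A Φ) = ev' z (A (ι (ev z Φ))) :=
  stmt13_general bV ev ev' ι M M' hM' hrec A hA
end

section
/- If P : H → H is a self-adjoint pointwise intertwiner on a reproducing kernel Hilbert space with kernel K_{z,w}, then P_z K_{z,w} = K_{z,w} P_w^* for all z, w ∈ D; moreover, if K_{z,0} and K_{0,w} are invertible for all z,w, then P_0^* commutes with K_{z,0}^{-1} K_{z,w} K_{0,w}^{-1} whenever P_0 = P_0^*. -/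
open ContinuousLinearMap

/-- If `P = P^*` is a self-adjoint pointwise intertwiner
(`(PΦ)_z = P_z Φ_z`) on a reproducing kernel Hilbert space with kernel
`K_{z,w} = K_z^* K_w` (kernel vectors total), then `P_z K_{z,w} = K_{z,w} P_w^*` for
all `z, w ∈ D`; moreover, if `K_{z,0}` and `K_{0,w}` are invertible for all `z, w`
(invertibility witnessed by `T z` and `S w`) and `P_0 = P_0^*`, then `P_0^*` commutes
with `K_{z,0}⁻¹ K_{z,w} K_{0,w}⁻¹`. -/
theorem stmt15 {D H V : Type*}
    [NormedAddCommGroup H] [InnerProductSpace ℂ H] [CompleteSpace H]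
    [NormedAddCommGroup V] [InnerProductSpace ℂ V] [CompleteSpace V]
    (o : D)  -- the point `0 ∈ D`
    (Km : D → (V →L[ℂ] H))
    (P : H →L[ℂ] H) (hPsa : IsSelfAdjoint P)
    (Pf : D → (V →L[ℂ] V))
    (hP : ∀ (Φ : H) (z : D), (adjoint (Km z)) (P Φ) = Pf z ((adjoint (Km z)) Φ))
    (htotal : (Submodule.span ℂ {x : H | ∃ (z : D) (η : V), Km z η = x}).topologicalClosure = ⊤)
    (T : D → (V ≃L[ℂ] V)) (S : D → (V ≃L[ℂ] V))
    (hT : ∀ z : D, (T z : V →L[ℂ] V) = (adjoint (Km z)).comp (Km o))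
    (hS : ∀ w : D, (S w : V →L[ℂ] V) = (adjoint (Km o)).comp (Km w))
    (hP0 : adjoint (Pf o) = Pf o) :
    (∀ z w : D,
      (Pf z).comp ((adjoint (Km z)).comp (Km w)) =
        ((adjoint (Km z)).comp (Km w)).comp (adjoint (Pf w)))
    ∧ ∀ z w : D,
        (adjoint (Pf o)).comp
            (((T z).symm : V →L[ℂ] V).comp
              (((adjoint (Km z)).comp (Km w)).comp ((S w).symm : V →L[ℂ] V)))
          = (((T z).symm : V →L[ℂ] V).comp
              (((adjoint (Km z)).comp (Km w)).comp ((S w).symm : V →L[ℂ] V))).comp (Pf o) := by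

  have h1 : ∀ z, (adjoint (Km z)).comp P = (Pf z).comp (adjoint (Km z)) := by
    intro z; ext Φ; simpa using hP Φ z
  have h2 : ∀ w, P.comp (Km w) = (Km w).comp (adjoint (Pf w)) := by
    intro w
    have := congrArg adjoint (h1 w)
    rwa [adjoint_comp, adjoint_comp, adjoint_adjoint, hPsa.adjoint_eq] at this
  have key : ∀ z w : D,
      (Pf z).comp ((adjoint (Km z)).comp (Km w)) =
        ((adjoint (Km z)).comp (Km w)).comp (adjoint (Pf w)) := by
    intro z w
    rw [← ContinuousLinearMap.comp_assoc, ← h1 z, ContinuousLinearMap.comp_assoc,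
      h2 w, ← ContinuousLinearMap.comp_assoc]
  refine ⟨key, fun z w => ?_⟩
  have hTz : (Pf z).comp (T z : V →L[ℂ] V) = (T z : V →L[ℂ] V).comp (Pf o) := by
    rw [hT z, ← hP0]; exact key z o
  have hSw : (Pf o).comp (S w : V →L[ℂ] V) = (S w : V →L[ℂ] V).comp (adjoint (Pf w)) := by
    rw [hS w]; exact key o w
  have hTz' : ∀ v : V, (T z).symm (Pf z v) = Pf o ((T z).symm v) := by
    intro v
    have := congrArg (fun f : V →L[ℂ] V => f ((T z).symm v)) hTz
    simp only [ContinuousLinearMap.comp_apply, ContinuousLinearEquiv.coe_coe,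
      ContinuousLinearEquiv.apply_symm_apply] at this
    rw [this, ContinuousLinearEquiv.symm_apply_apply]
  have hSw' : ∀ v : V, adjoint (Pf w) ((S w).symm v) = (S w).symm (Pf o v) := by
    intro v
    have := congrArg (fun f : V →L[ℂ] V => f ((S w).symm v)) hSw
    simp only [ContinuousLinearMap.comp_apply, ContinuousLinearEquiv.coe_coe,
      ContinuousLinearEquiv.apply_symm_apply] at this
    rw [this, ContinuousLinearEquiv.symm_apply_apply]
  have kA := fun v : V => congrArg (fun f : V →L[ℂ] V => f v) (key z w)
  simp only [ContinuousLinearMap.comp_apply] at kA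
  rw [hP0]
  ext v
  simp only [ContinuousLinearMap.comp_apply, ContinuousLinearEquiv.coe_coe]
  rw [← hTz', kA]
  exact congrArg _ (congrArg _ (congrArg _ (hSw' v)))
end
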